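/- Let E be a finite-dimensional real inner product space, let C : ℝ → E be real-analytic on a neighborhood of 0 with C(0) = 0 and C not identically zero on any neighborhood of 0, and let ε > 0. Then there exists δ > 0 such that for all s ∈ (0, δ): ⟪C(s), C′(s)⟫ > 0 and ‖C(s)‖²·‖C′(s)‖² − ⟪C(s), C′(s)⟫² < ε² · ⟪C(s), C′(s)⟫². -/

import Mathlib

/-!
Since `C` is analytic and not locally zero, `C s = s ^ (m + 1) • g s` near `0` with `g` analytic
and `g 0 ≠ 0`, hence `C' s = s ^ m • v s` with `v s = (m + 1) • g s + s • g' s`. Both the sign of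
`⟪C, C'⟫` and the inequality are invariant under rescaling `C s` and `C' s` by positive scalars, so
for `s > 0` they are properties of the pair `(g s, v s)`. This pair tends to
`(g 0, (m + 1) • g 0)`, two positively proportional nonzero vectors, for which the angle is zero;
the condition is open, so it persists near `0`.
-/

open Filter Topology

section TanSqAngleLt

variable {E : Type*} [NormedAddCommGroup E] [InnerProductSpace ℝ E]

/-- `(‖x‖² ‖y‖² - ⟪x, y⟫²) / ⟪x, y⟫²` is the squared tangent of the angle between `x` and `y`;
the positivity of `⟪x, y⟫` makes the angle acute and lets the division be cleared. -/
def TanSqAngleLt (ε : ℝ) (x y : E) : Prop :=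
  0 < inner ℝ x y ∧ ‖x‖ ^ 2 * ‖y‖ ^ 2 - inner ℝ x y ^ 2 < ε ^ 2 * inner ℝ x y ^ 2

theorem isOpen_setOf_tanSqAngleLt (ε : ℝ) : IsOpen {p : E × E | TanSqAngleLt ε p.1 p.2} := by
  simp only [TanSqAngleLt, Set.ofPred_and]
  exact (isOpen_lt continuous_const (by fun_prop)).inter (isOpen_lt (by fun_prop) (by fun_prop))

theorem tanSqAngleLt_self_smul {ε c : ℝ} (hε : 0 < ε) (hc : 0 < c) {x : E} (hx : x ≠ 0) :
    TanSqAngleLt ε x (c • x) := by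
  have hx' : 0 < ‖x‖ := norm_pos_iff.mpr hx
  simp only [TanSqAngleLt, real_inner_smul_right, real_inner_self_eq_norm_sq, norm_smul,
    Real.norm_eq_abs, abs_of_pos hc]
  constructor
  · positivity
  · have : 0 < ε ^ 2 * (c * ‖x‖ ^ 2) ^ 2 := by positivity
    linarith

theorem TanSqAngleLt.smul_smul {ε a b : ℝ} {x y : E} (h : TanSqAngleLt ε x y) (ha : 0 < a)
    (hb : 0 < b) : TanSqAngleLt ε (a • x) (b • y) := by
  obtain ⟨hpos, hlt⟩ := h
  simp only [TanSqAngleLt, real_inner_smul_left, real_inner_smul_right, norm_smul,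
    Real.norm_eq_abs, abs_of_pos ha, abs_of_pos hb]
  have hab : 0 < (a * b) ^ 2 := by positivity
  constructor
  · positivity
  · nlinarith [mul_lt_mul_of_pos_left hlt hab]

end TanSqAngleLt

section AnalyticCurve

variable {𝕜 E : Type*} [NontriviallyNormedField 𝕜] [NormedAddCommGroup E] [NormedSpace 𝕜 E]

theorem AnalyticAt.exists_eventuallyEq_pow_succ_smul {C : 𝕜 → E} (hC : AnalyticAt 𝕜 C 0)
    (h0 : C 0 = 0) (hnz : ¬ ∀ᶠ s in 𝓝 0, C s = 0) :
    ∃ (m : ℕ) (g : 𝕜 → E), AnalyticAt 𝕜 g 0 ∧ g 0 ≠ 0 ∧ C =ᶠ[𝓝 0] fun s ↦ s ^ (m + 1) • g s := by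
  obtain ⟨n, hn⟩ := WithTop.ne_top_iff_exists.mp fun h ↦ hnz (analyticOrderAt_eq_top.mp h)
  obtain ⟨g, hg, hg0, hCg⟩ := (hC.analyticOrderAt_eq_natCast (n := n)).mp hn.symm
  simp only [sub_zero] at hCg
  obtain _ | m := n
  · simp only [pow_zero, one_smul] at hCg
    exact absurd (h0 ▸ hCg.self_of_nhds).symm hg0
  · exact ⟨m, g, hg, hg0, hCg⟩

theorem HasDerivAt.pow_succ_smul {g : 𝕜 → E} {g' : E} {s : 𝕜} (hg : HasDerivAt g g' s) (m : ℕ) :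
    HasDerivAt (fun t ↦ t ^ (m + 1) • g t) (s ^ m • ((m + 1 : 𝕜) • g s + s • g')) s := by
  refine ((hasDerivAt_pow (m + 1) s).smul hg).congr_deriv ?_
  simp only [smul_add, smul_smul, pow_succ, Nat.cast_add, Nat.cast_one, add_tsub_cancel_right]
  rw [add_comm]
  congr 2
  ring

end AnalyticCurve

/-- Quantitative form of the contradiction via the curve selection lemma: along a
nontrivial real-analytic curve through the origin, for all small `s > 0` the squared
tangent of the angle between `C(s)` and `C′(s)` is `< ε²`. -/
theorem analytic_curve_tangent_squared_lt
    {E : Type*} [NormedAddCommGroup E] [InnerProductSpace ℝ E] [FiniteDimensional ℝ E]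
    (C : ℝ → E) (hC : AnalyticAt ℝ C 0) (h0 : C 0 = 0)
    (hnz : ¬ ∀ᶠ s in nhds (0 : ℝ), C s = 0) (ε : ℝ) (hε : 0 < ε) :
    ∃ δ > 0, ∀ s ∈ Set.Ioo (0 : ℝ) δ,
      (0 : ℝ) < inner ℝ (C s) (deriv C s) ∧
      ‖C s‖ ^ 2 * ‖deriv C s‖ ^ 2 - (inner ℝ (C s) (deriv C s) : ℝ) ^ 2 <
        ε ^ 2 * (inner ℝ (C s) (deriv C s) : ℝ) ^ 2 := by
  obtain ⟨m, g, hg, hg0, hCg⟩ := hC.exists_eventuallyEq_pow_succ_smul h0 hnz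
  set v : ℝ → E := fun s ↦ (m + 1 : ℝ) • g s + s • deriv g s
  have hderiv : ∀ᶠ s in 𝓝 0, deriv C s = s ^ m • v s := by
    filter_upwards [hCg.deriv, hg.eventually_analyticAt] with s hs hgs
    exact hs ▸ (hgs.differentiableAt.hasDerivAt.pow_succ_smul m).deriv
  have hv : ContinuousAt v 0 := by
    have := hg.deriv.continuousAt
    fun_prop
  have hangle : ∀ᶠ s in 𝓝 0, TanSqAngleLt ε (g s) (v s) := by
    refine (hg.continuousAt.prodMk hv).eventually
      ((isOpen_setOf_tanSqAngleLt ε).mem_nhds ?_)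
    simpa [v] using tanSqAngleLt_self_smul hε (by positivity : (0 : ℝ) < m + 1) hg0
  obtain ⟨δ, hδ, hball⟩ := (nhdsGT_basis (0 : ℝ)).eventually_iff.mp
    (nhdsWithin_le_nhds (hCg.and (hderiv.and hangle)))
  refine ⟨δ, hδ, fun s hs ↦ ?_⟩
  obtain ⟨hCs, hDs, hs_angle⟩ := hball hs
  rw [hCs, hDs]
  exact hs_angle.smul_smul (pow_pos hs.1 _) (pow_pos hs.1 _)
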